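/- For any pair of words σ_1, σ_2 ∈ Σ_{r^m}*, the closure of the convex hull of ρ(σ_1*·σ_2*) equals the closure of the convex hull of ρ(σ_2*·σ_1*): cl(conv(ρ({σ_1^j·σ_2^k : j,k ∈ ℕ}))) = cl(conv(ρ({σ_2^k·σ_1^j : j,k ∈ ℕ}))), where σ^j denotes the j-fold concatenation of σ. -/
import Mathlib


/-- The alphabet `Σ_{r^m}` of digit vectors. -/
abbrev Alpha (r m : ℕ) := Fin m → Fin r
abbrev Word (r m : ℕ) := List (Alpha r m)

/-- `ρ(b₁⋯bₙ) = Σᵢ r^(i-1)·bᵢ` (least significant digit first), viewed in `ℝ^m`. -/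
noncomputable def rho (r m : ℕ) : Word r m → (Fin m → ℝ)
  | [] => 0
  | b :: w => (fun j => (b j : ℝ)) + (r : ℝ) • rho r m w

/-- `Γ_σ(x) = r^|σ|·x + ρ(σ)`. -/
noncomputable def Gam (r m : ℕ) (σ : Word r m) (x : Fin m → ℝ) : Fin m → ℝ :=
  (r : ℝ) ^ σ.length • x + rho r m σ

/-- The inverse bijection `Γ_σ⁻¹(y) = (y - ρ(σ))/r^|σ|`. -/
noncomputable def GamInv (r m : ℕ) (σ : Word r m) (y : Fin m → ℝ) : Fin m → ℝ :=
  ((r : ℝ) ^ σ.length)⁻¹ • (y - rho r m σ)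

/-- `ξ(σ) = ρ(σ)/(1 - r^|σ|)` (meaningful for nonempty `σ`). -/
noncomputable def xi (r m : ℕ) (σ : Word r m) : Fin m → ℝ :=
  (1 - (r : ℝ) ^ σ.length)⁻¹ • rho r m σ

/-- `ρ(L) = {ρ(σ) : σ ∈ L}`. -/
def rhoSet (r m : ℕ) (L : Set (Word r m)) : Set (Fin m → ℝ) :=
  {x | ∃ σ ∈ L, x = rho r m σ}

/-- `ξ(L) = {ξ(σ) : σ ∈ L, σ ≠ ε}`. -/
def xiSet (r m : ℕ) (L : Set (Word r m)) : Set (Fin m → ℝ) :=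
  {x | ∃ σ ∈ L, σ ≠ [] ∧ x = xi r m σ}

/-- Kleene star of a language. -/
def kstar' {α : Type*} (L : Set (List α)) : Set (List α) :=
  {w | ∃ ws : List (List α), (∀ u ∈ ws, u ∈ L) ∧ w = ws.flatten}

/-- Concatenation of two languages. -/
def catL {α : Type*} (A B : Set (List α)) : Set (List α) :=
  {w | ∃ a ∈ A, ∃ b ∈ B, w = a ++ b}

/-- `chainLang σ Ls n = σ_{n+1}·(L_n)*·σ_n ⋯ (L_1)*·σ_1`. -/
def chainLang {α : Type*} (σ : ℕ → List α) (Ls : ℕ → Set (List α)) : ℕ → Set (List α)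
  | 0 => {σ 1}
  | n + 1 => catL {σ (n + 2)} (catL (kstar' (Ls (n + 1))) (chainLang σ Ls n))

/-- `catDown σ hi lo = σ_hi·σ_{hi-1}⋯σ_lo` (empty if `lo > hi`). -/
def catDown {α : Type*} (σ : ℕ → List α) (hi lo : ℕ) : List α :=
  ((List.range (hi + 1 - lo)).map fun j => σ (hi - j)).flatten

/-- `catUp σ k = σ_1·σ_2⋯σ_k`. -/
def catUp {α : Type*} (σ : ℕ → List α) (k : ℕ) : List α :=
  ((List.range k).map fun j => σ (j + 1)).flatten

/-- `σ^k`, the `k`-fold concatenation of `σ`. -/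
def repK {α : Type*} (σ : List α) (k : ℕ) : List α := (List.replicate k σ).flatten

/-- `ℝ₋·X = {t·x : t ≤ 0, x ∈ X}`. -/
def negSmul {m : ℕ} (X : Set (Fin m → ℝ)) : Set (Fin m → ℝ) :=
  {y | ∃ t : ℝ, t ≤ 0 ∧ ∃ x ∈ X, y = t • x}

/-- The cone `C(R)` generated by a finite set of rays. -/
def coneOf {m : ℕ} (R : Finset ((Fin m → ℝ) × ℝ)) : Set ((Fin m → ℝ) × ℝ) :=
  {y | ∃ t : ((Fin m → ℝ) × ℝ) → ℝ, (∀ p, 0 ≤ t p) ∧ y = ∑ p ∈ R, t p • p}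

/-- The polyhedral convex set `P(R) = {x : (x,1) ∈ C(R)}`. -/
def polyOf {m : ℕ} (R : Finset ((Fin m → ℝ) × ℝ)) : Set (Fin m → ℝ) :=
  {x | (x, (1 : ℝ)) ∈ coneOf R}


section Aux

variable {r m : ℕ}

lemma rho_append (u v : Word r m) :
    rho r m (u ++ v) = rho r m u + (r : ℝ) ^ u.length • rho r m v := by
  induction u with
  | nil => simp [rho]
  | cons b u ih =>
      show rho r m (b :: (u ++ v)) = _
      rw [rho, rho, ih, smul_add, smul_smul]
      simp [pow_succ, add_assoc, mul_comm]

lemma repK_zero {α : Type*} (σ : List α) : repK σ 0 = [] := rfl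

lemma repK_succ {α : Type*} (σ : List α) (j : ℕ) :
    repK σ (j + 1) = σ ++ repK σ j := by
  simp [repK, List.replicate_succ]

lemma rho_repK (σ : Word r m) (j : ℕ) :
    rho r m (repK σ j)
      = (∑ i ∈ Finset.range j, ((r : ℝ) ^ σ.length) ^ i) • rho r m σ := by
  induction j with
  | zero => simp [repK_zero, rho]
  | succ j ih =>
      rw [repK_succ, rho_append, ih, smul_smul, geom_sum_succ, add_smul,
        one_smul, add_comm]

/-- If `x ∈ S` and `S` contains points `λ • a` with `λ` arbitrarily large,
then `x + t • a` is in the closed convex hull of `S` for every `t ≥ 0`. -/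
lemma ray_mem_closure_convexHull (S : Set (Fin m → ℝ)) (x a : Fin m → ℝ)
    (t : ℝ) (ht : 0 ≤ t) (hx : x ∈ S)
    (ha : ∀ n : ℕ, ∃ lam : ℝ, (n : ℝ) ≤ lam ∧ lam • a ∈ S) :
    x + t • a ∈ closure (convexHull ℝ S) := by
  choose lam hlam hmem using ha
  set N : ℕ := ⌈t⌉₊ + 1 with hN
  have hNt : ∀ n : ℕ, t ≤ ((N + n : ℕ) : ℝ) := by
    intro n
    have h0 : (0:ℝ) ≤ (n:ℝ) := Nat.cast_nonneg n
    have h1 : ((⌈t⌉₊ : ℕ) : ℝ) ≤ ((N + n : ℕ) : ℝ) := by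
      simp only [hN]; push_cast; linarith
    exact (Nat.le_ceil t).trans h1
  have hlampos : ∀ n : ℕ, (0:ℝ) < lam (N + n) := by
    intro n
    have h1 : 1 ≤ N + n := by omega
    have h2 : (1:ℝ) ≤ ((N + n : ℕ) : ℝ) := by exact_mod_cast h1
    linarith [hlam (N + n)]
  -- the approximating sequence
  have hseq : ∀ n : ℕ,
      x + t • a - (t / lam (N + n)) • x ∈ convexHull ℝ S := by
    intro n
    set L := lam (N + n) with hL
    have hLpos : (0:ℝ) < L := hlampos n
    have hθ0 : (0:ℝ) ≤ t / L := div_nonneg ht hLpos.le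
    have hθ1 : t / L ≤ 1 := by
      rw [div_le_one hLpos]
      exact (hNt n).trans (hlam (N + n))
    have hmem' :
        (1 - t / L) • x + (t / L) • (L • a) ∈ convexHull ℝ S :=
      (convex_convexHull ℝ S) (subset_convexHull ℝ S hx)
        (subset_convexHull ℝ S (hmem (N + n)))
        (by linarith) hθ0 (by ring)
    have heq : (1 - t / L) • x + (t / L) • (L • a)
        = x + t • a - (t / L) • x := by
      rw [smul_smul, div_mul_cancel₀ _ hLpos.ne', sub_smul, one_smul]
      abel
    rwa [heq] at hmem'
  -- convergence
  have htend : Filter.Tendsto (fun n : ℕ => (t / lam (N + n)) • x)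
      Filter.atTop (nhds 0) := by
    have h0 : Filter.Tendsto (fun n : ℕ => t / lam (N + n))
        Filter.atTop (nhds 0) := by
      apply squeeze_zero' (g := fun n : ℕ => t / (n : ℝ))
      · exact Filter.Eventually.of_forall fun n => div_nonneg ht (hlampos n).le
      · filter_upwards [Filter.eventually_ge_atTop 1] with n hn
        have hpos : (0:ℝ) < (n:ℝ) := by exact_mod_cast hn
        have hle : (n:ℝ) ≤ lam (N + n) := by
          refine le_trans ?_ (hlam (N + n))
          exact_mod_cast Nat.le_add_left n N
        exact div_le_div_of_nonneg_left ht hpos hle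
      · exact tendsto_const_div_atTop_nhds_zero_nat t
    have := h0.smul_const x
    simpa using this
  have hmain : Filter.Tendsto (fun n : ℕ => x + t • a - (t / lam (N + n)) • x)
      Filter.atTop (nhds (x + t • a)) := by
    have := (tendsto_const_nhds (x := x + t • a)
      (f := Filter.atTop (α := ℕ))).sub htend
    simpa using this
  exact mem_closure_of_tendsto hmain (Filter.Eventually.of_forall hseq)

lemma key_subset (r m : ℕ) (hr : 2 ≤ r) (σ₁ σ₂ : Word r m) :
    rhoSet r m {u : Word r m | ∃ j k : ℕ, u = repK σ₂ k ++ repK σ₁ j} ⊆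
      closure (convexHull ℝ (rhoSet r m
        {u : Word r m | ∃ j k : ℕ, u = repK σ₁ j ++ repK σ₂ k})) := by
  have hr1 : (1:ℝ) ≤ (r:ℝ) := by exact_mod_cast Nat.one_le_of_lt hr
  rintro y ⟨w, ⟨j, k, rfl⟩, rfl⟩
  set S := rhoSet r m {u : Word r m | ∃ j k : ℕ, u = repK σ₁ j ++ repK σ₂ k}
  have hxS : rho r m (repK σ₂ k) ∈ S := by
    refine ⟨repK σ₂ k, ⟨0, k, ?_⟩, rfl⟩
    simp [repK_zero]
  set p : ℝ := (r : ℝ) ^ σ₁.length with hp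
  have hp1 : (1:ℝ) ≤ p := one_le_pow₀ hr1
  set c : ℕ → ℝ := fun j => ∑ i ∈ Finset.range j, p ^ i with hc
  have hcnn : ∀ j, 0 ≤ c j := fun j =>
    Finset.sum_nonneg fun i _ => pow_nonneg (by linarith) i
  have haS : ∀ n : ℕ, ∃ lam : ℝ, (n : ℝ) ≤ lam ∧ lam • rho r m σ₁ ∈ S := by
    intro n
    refine ⟨c n, ?_, ?_⟩
    · calc (n:ℝ) = ∑ _i ∈ Finset.range n, (1:ℝ) := by simp
        _ ≤ c n := Finset.sum_le_sum fun i _ => one_le_pow₀ hp1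
    · refine ⟨repK σ₁ n, ⟨n, 0, by simp [repK_zero]⟩, ?_⟩
      rw [rho_repK]
  have hkey := ray_mem_closure_convexHull S (rho r m (repK σ₂ k)) (rho r m σ₁)
    ((r:ℝ) ^ (repK σ₂ k).length * c j)
    (mul_nonneg (pow_nonneg (by linarith) _) (hcnn j)) hxS haS
  have heq : rho r m (repK σ₂ k ++ repK σ₁ j)
      = rho r m (repK σ₂ k)
        + ((r:ℝ) ^ (repK σ₂ k).length * c j) • rho r m σ₁ := by
    rw [rho_append, rho_repK, rho_repK, smul_smul]
  rw [heq]
  exact hkey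

end Aux

/-- `cl(conv(ρ(σ₁*·σ₂*))) = cl(conv(ρ(σ₂*·σ₁*)))`. -/
theorem closure_convexHull_rho_comm
    (r m : ℕ) (hr : 2 ≤ r) (hm : 1 ≤ m) (σ₁ σ₂ : Word r m) :
    closure (convexHull ℝ (rhoSet r m
        {u : Word r m | ∃ j k : ℕ, u = repK σ₁ j ++ repK σ₂ k})) =
      closure (convexHull ℝ (rhoSet r m
        {u : Word r m | ∃ j k : ℕ, u = repK σ₂ k ++ repK σ₁ j})) := by
  have h1 := key_subset r m hr σ₁ σ₂
  have h2 := key_subset r m hr σ₂ σ₁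
  have hswap : {u : Word r m | ∃ j k : ℕ, u = repK σ₂ j ++ repK σ₁ k}
      = {u : Word r m | ∃ j k : ℕ, u = repK σ₂ k ++ repK σ₁ j} := by
    ext w; constructor <;> rintro ⟨j, k, rfl⟩ <;> exact ⟨k, j, rfl⟩
  have hswap2 : {u : Word r m | ∃ j k : ℕ, u = repK σ₁ k ++ repK σ₂ j}
      = {u : Word r m | ∃ j k : ℕ, u = repK σ₁ j ++ repK σ₂ k} := by
    ext w; constructor <;> rintro ⟨j, k, rfl⟩ <;> exact ⟨k, j, rfl⟩
  rw [hswap2, hswap] at h2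
  have hC1 : IsClosed (closure (convexHull ℝ (rhoSet r m
      {u : Word r m | ∃ j k : ℕ, u = repK σ₁ j ++ repK σ₂ k}))) := isClosed_closure
  have hC2 : IsClosed (closure (convexHull ℝ (rhoSet r m
      {u : Word r m | ∃ j k : ℕ, u = repK σ₂ k ++ repK σ₁ j}))) := isClosed_closure
  apply le_antisymm
  · exact closure_minimal (convexHull_min h2
      ((convex_convexHull ℝ _).closure)) hC2
  · exact closure_minimal (convexHull_min h1
      ((convex_convexHull ℝ _).closure)) hC1
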